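/- arXiv:1109.5636 — 5 statements merged into one kernel-verified Lean document; each statement's English description precedes it below -/
import Mathlib

section
/- Let W be a Boolean matrix with rows indexed by Fin B and columns indexed by Fin S that is (K,ε)-disjunct, and let T be a set of column indices with |T| ≤ K. Suppose the (noisy) outcome vector g ∈ {0,1}^B satisfies: (a) supp(g) ⊆ ⋃_{j∈T} supp(W_{:,j}) (noise only erases ones), and (b) for every i ∈ T, |supp(W_{:,i}) \ supp(g)| ≤ ε (at most ε erasures affect each defective column). Then the distance decoder with threshold ε recovers T exactly: {i : |supp(W_{:,i}) \ supp(g)| ≤ ε} = T. -/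
/-- The support of column `i` of a Boolean matrix `W`: the set of rows `r` with `W r i = true`. -/
def supp {R I : Type*} [Fintype R] (W : R → I → Bool) (i : I) : Finset R :=
  Finset.univ.filter fun r => W r i = true

/-- The support of a Boolean vector `g`: the set of indices `r` with `g r = true`. -/
def suppv {R : Type*} [Fintype R] (g : R → Bool) : Finset R :=
  Finset.univ.filter fun r => g r = true

/-- A Boolean matrix `W` is `(K, ε)`-disjunct if for every column `i` and every set `T` of
columns with `|T| ≤ K`, we have `|supp(W_{:,i}) \ ⋃_{j ∈ T, j ≠ i} supp(W_{:,j})| > ε`. -/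
def Disjunct {R I : Type*} [Fintype R] [DecidableEq R] [DecidableEq I]
    (W : R → I → Bool) (K : ℕ) (ε : ℝ) : Prop :=
  ∀ (i : I) (T : Finset I), T.card ≤ K →
    ε < ((supp W i \ (T.erase i).biUnion fun j => supp W j).card : ℝ)

/-- If `W` is `(K, ε)`-disjunct, `T` is a set of at most `K` defective columns, and the noisy
outcome vector `g` satisfies (a) `supp g ⊆ ⋃_{j ∈ T} supp(W_{:,j})` (noise only erases ones)
and (b) `|supp(W_{:,i}) \ supp g| ≤ ε` for every `i ∈ T` (at most `ε` erasures per defective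
column), then the distance decoder with threshold `ε` recovers `T` exactly. -/
theorem distance_decoder_noisy {B S K : ℕ} {ε : ℝ} (W : Fin B → Fin S → Bool)
    (hW : Disjunct W K ε)
    (T : Finset (Fin S)) (hT : T.card ≤ K)
    (g : Fin B → Bool)
    (hg_sub : suppv g ⊆ T.biUnion fun j => supp W j)
    (hg_err : ∀ i ∈ T, ((supp W i \ suppv g).card : ℝ) ≤ ε) :
    (Finset.univ.filter fun i => ((supp W i \ suppv g).card : ℝ) ≤ ε) = T := by
  ext i
  simp only [Finset.mem_filter, Finset.mem_univ, true_and]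
  constructor
  · intro hi
    by_contra hiT
    have key := hW i T hT
    have herase : T.erase i = T := Finset.erase_eq_of_notMem hiT
    rw [herase] at key
    have hsub : supp W i \ T.biUnion (fun j => supp W j) ⊆ supp W i \ suppv g := by
      intro r hr
      rw [Finset.mem_sdiff] at hr ⊢
      exact ⟨hr.1, fun hg => hr.2 (hg_sub hg)⟩
    have := Finset.card_le_card hsub
    have : ((supp W i \ T.biUnion (fun j => supp W j)).card : ℝ) ≤ ((supp W i \ suppv g).card : ℝ) := by
      exact_mod_cast this
    linarith
  · exact hg_err i
end

section
/- For every real number δ ≥ 0, one has e^δ / (1+δ)^{1+δ} ≤ exp(−δ² / (2 + δ)); equivalently, δ − (1+δ)·log(1+δ) ≤ −δ²/(2+δ). -/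
/-!
The whole content is the lower bound `log (1 + δ) ≥ 2δ / (2 + δ)`. Putting `t = δ / (2 + δ)`, so that
`(1 + t) / (1 - t) = 1 + δ`, it is the first term of the nonnegative series
`log (1 + t) - log (1 - t) = 2 (t + t³/3 + t⁵/5 + ⋯)`. Multiplying by `1 + δ` gives the logarithmic form,
and exponentiating gives the other one.
-/

open Real

theorem Real.two_mul_le_log_one_add_sub_log_one_sub {x : ℝ} (hx₀ : 0 ≤ x) (hx₁ : x < 1) :
    2 * x ≤ log (1 + x) - log (1 - x) := by
  have hsum := hasSum_log_sub_log_of_abs_lt_one (abs_lt.mpr ⟨by linarith, hx₁⟩)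
  simpa using le_hasSum hsum 0 fun k _ => by positivity

theorem Real.two_mul_div_two_add_le_log_one_add {x : ℝ} (hx : 0 ≤ x) :
    2 * x / (2 + x) ≤ log (1 + x) := by
  have h2x : 0 < 2 + x := by linarith
  set t := x / (2 + x) with ht
  have ht₀ : 0 ≤ t := by positivity
  have ht₁ : t < 1 := (div_lt_one h2x).mpr (by linarith)
  have hratio : (1 + t) / (1 - t) = 1 + x := by
    rw [ht]
    field_simp
    ring
  calc 2 * x / (2 + x) = 2 * t := by rw [ht, mul_div_assoc]
    _ ≤ log (1 + t) - log (1 - t) := two_mul_le_log_one_add_sub_log_one_sub ht₀ ht₁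
    _ = log (1 + x) := by rw [← log_div (by linarith) (by linarith), hratio]

theorem Real.self_sub_mul_log_one_add_le {δ : ℝ} (hδ : 0 ≤ δ) :
    δ - (1 + δ) * log (1 + δ) ≤ -δ ^ 2 / (2 + δ) := by
  have h2δ : 0 < 2 + δ := by linarith
  have hlog := mul_le_mul_of_nonneg_left (two_mul_div_two_add_le_log_one_add hδ)
    (by linarith : 0 ≤ 1 + δ)
  calc δ - (1 + δ) * log (1 + δ) ≤ δ - (1 + δ) * (2 * δ / (2 + δ)) := by linarith
    _ = -δ ^ 2 / (2 + δ) := by field_simp; ring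

/-- For every real `δ ≥ 0`, one has `e^δ / (1+δ)^{1+δ} ≤ exp(−δ² / (2 + δ))`;
equivalently, `δ − (1+δ)·log(1+δ) ≤ −δ²/(2+δ)`. -/
theorem exp_div_rpow_le (δ : ℝ) (hδ : 0 ≤ δ) :
    Real.exp δ / (1 + δ) ^ (1 + δ) ≤ Real.exp (-δ ^ 2 / (2 + δ)) ∧
    δ - (1 + δ) * Real.log (1 + δ) ≤ -δ ^ 2 / (2 + δ) := by
  have hlog := self_sub_mul_log_one_add_le hδ
  refine ⟨?_, hlog⟩
  rw [rpow_def_of_pos (by linarith), ← exp_sub, exp_le_exp, mul_comm]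
  exact hlog
end

section
/- Consider the product probability measure on Boolean matrices W : Fin B → Fin S → Bool whose B·S entries are independent Bernoulli(q) random variables, with 0 < q < 1, and let K ≥ 1 with K ≤ S. Set μ₂ = B·q·(1−q)^{K−1} and let ε be a real with 0 ≤ ε < μ₂. Then the probability that W fails the (K,ε)-disjunctness condition for some column and some set of K−1 other columns is at most the union bound: P( ∃ i, ∃ T ⊆ columns \ {i} with |T| = K−1 such that |{r : W r i = true and W r j = false ∀ j ∈ T}| < ε ) ≤ S · C(S−1, K−1) · exp(−(μ₂ − ε)² / (2 μ₂)). -/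
/-!
For a fixed column `i` and set `T` of other columns, the rows are i.i.d. and each row has the
pattern "`i` on, `T` off" with probability `p = q(1-q)^{K-1}`, so the number of such rows is
`Binomial(B, p)` with mean `μ₂`. The multiplicative Chernoff bound for its lower tail gives
`exp(-(μ₂ - ε)² / (2μ₂))`, and a union bound over the `S · C(S-1, K-1)` pairs `(i, T)` finishes.
-/

open MeasureTheory ProbabilityTheory Finset Real
open scoped NNReal ENNReal

/-- The product probability measure on Boolean matrices `W : Fin B → Fin S → Bool` whose
`B·S` entries are independent Bernoulli(`q`) random variables. -/
noncomputable def matrixBernoulliMeasure (B S : ℕ) (q : ENNReal) (h : q ≤ 1) :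
    Measure (Fin B → Fin S → Bool) :=
  Measure.pi fun _ : Fin B => Measure.pi fun _ : Fin S => (PMF.bernoulli q.toNNReal (by simpa using ENNReal.toNNReal_mono ENNReal.one_ne_top h)).toMeasure

theorem Real.exp_neg_le_one_sub_add_sq_div_two {t : ℝ} (ht : 0 ≤ t) :
    exp (-t) ≤ 1 - t + t ^ 2 / 2 := by
  have hpos : 0 < 1 + t + t ^ 2 / 2 := by positivity
  calc exp (-t) = (exp t)⁻¹ := exp_neg t
    _ ≤ (1 + t + t ^ 2 / 2)⁻¹ := inv_anti₀ hpos (quadratic_le_exp_of_nonneg ht)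
    _ ≤ 1 - t + t ^ 2 / 2 := by
      rw [inv_le_iff_one_le_mul₀ hpos]
      nlinarith [sq_nonneg (t ^ 2)]

/- `s = (μ - ε) / μ` minimises the quadratic upper bound `s ε + μ (-s + s² / 2)`. -/
theorem chernoff_lower_exponent_le {μ ε : ℝ} (hμ : 0 < μ) (hεμ : ε ≤ μ) :
    (μ - ε) / μ * ε + μ * (exp (-((μ - ε) / μ)) - 1) ≤ -(μ - ε) ^ 2 / (2 * μ) := by
  set s := (μ - ε) / μ with hs_def
  have hs : 0 ≤ s := div_nonneg (by linarith) hμ.le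
  calc s * ε + μ * (exp (-s) - 1) ≤ s * ε + μ * (-s + s ^ 2 / 2) := by
        gcongr; linarith [exp_neg_le_one_sub_add_sq_div_two hs]
    _ = -(μ - ε) ^ 2 / (2 * μ) := by rw [hs_def]; field_simp; ring

theorem mgf_indicator_one {α : Type*} [MeasurableSpace α] {ν : Measure α}
    [IsProbabilityMeasure ν] {C : Set α} (hC : MeasurableSet C) (t : ℝ) :
    mgf (C.indicator 1) ν t = 1 + ν.real C * (exp t - 1) := by
  have h : (fun a => exp (t * C.indicator 1 a))
      = fun a => 1 + C.indicator (fun _ => exp t - 1) a := by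
    ext a
    by_cases ha : a ∈ C <;> simp [ha]
  rw [mgf, h, integral_add (integrable_const _) ((integrable_const _).indicator hC),
    integral_indicator_const _ hC]
  simp

theorem mgf_pi_sum_indicator_one {ι α : Type*} [Fintype ι] [MeasurableSpace α]
    {ν : Measure α} [IsProbabilityMeasure ν] {C : Set α} (hC : MeasurableSet C) (t : ℝ) :
    mgf (fun W : ι → α => ∑ r, C.indicator 1 (W r)) (Measure.pi fun _ : ι => ν) t
      = (1 + ν.real C * (exp t - 1)) ^ Fintype.card ι := by
  set X : ι → (ι → α) → ℝ := fun r W => C.indicator 1 (W r)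
  have hX_meas : ∀ r, Measurable (X r) :=
    fun r => (measurable_one.indicator hC).comp (measurable_pi_apply r)
  have hindep : iIndepFun X (Measure.pi fun _ : ι => ν) :=
    iIndepFun_pi fun _ => (measurable_one.indicator hC).aemeasurable
  have hmgf : ∀ r, mgf (X r) (Measure.pi fun _ : ι => ν) t = 1 + ν.real C * (exp t - 1) := by
    intro r
    rw [← mgf_indicator_one hC]
    conv_rhs => rw [← (measurePreserving_eval (fun _ : ι => ν) r).map_eq]
    exact (mgf_map (measurable_pi_apply (X := fun _ : ι => α) r).aemeasurable
      ((measurable_one.indicator hC).const_mul _).exp.aestronglyMeasurable).symm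
  rw [← Finset.sum_fn, hindep.mgf_sum hX_meas, prod_congr rfl fun r _ => hmgf r, prod_const,
    card_univ]

theorem measureReal_pi_card_filter_lt_le {ι α : Type*} [Fintype ι] [MeasurableSpace α]
    {ν : Measure α} [IsProbabilityMeasure ν] (P : α → Prop) [DecidablePred P]
    (hP : MeasurableSet {a | P a}) {μ ε : ℝ} (hμ : μ = Fintype.card ι * ν.real {a | P a})
    (hμ0 : 0 < μ) (hεμ : ε ≤ μ) :
    (Measure.pi fun _ : ι => ν).real {W | (#{r | P (W r)} : ℝ) < ε}
      ≤ exp (-(μ - ε) ^ 2 / (2 * μ)) := by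
  set p := ν.real {a | P a}
  set s := (μ - ε) / μ
  have hs : 0 ≤ s := div_nonneg (by linarith) hμ0.le
  set N : (ι → α) → ℝ := fun W => ∑ r, {a | P a}.indicator 1 (W r)
  have hN : ∀ W : ι → α, (#{r | P (W r)} : ℝ) = N W := by
    intro W
    rw [natCast_card_filter]
    simp [N, Set.indicator_apply]
  have hint : Integrable (fun W => exp (-s * N W)) (Measure.pi fun _ : ι => ν) := by
    refine Integrable.of_bound (by fun_prop) 1 (ae_of_all _ fun W => ?_)
    have h0 : 0 ≤ N W := sum_nonneg fun r _ => Set.indicator_nonneg (fun _ _ => zero_le_one) _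
    rw [Real.norm_of_nonneg (exp_pos _).le, exp_le_one_iff]
    nlinarith
  have hbase : 0 ≤ 1 + p * (exp (-s) - 1) := by
    have : p ≤ 1 := measureReal_le_one
    nlinarith [exp_pos (-s), measureReal_nonneg (μ := ν) (s := {a | P a})]
  calc (Measure.pi fun _ : ι => ν).real {W | (#{r | P (W r)} : ℝ) < ε}
      ≤ (Measure.pi fun _ : ι => ν).real {W | N W ≤ ε} :=
        measureReal_mono fun W hW => (hN W ▸ hW : N W < ε).le
    _ ≤ exp (-(-s) * ε) * mgf N (Measure.pi fun _ : ι => ν) (-s) :=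
        measure_le_le_exp_mul_mgf ε (neg_nonpos.2 hs) hint
    _ = exp (s * ε) * (1 + p * (exp (-s) - 1)) ^ Fintype.card ι := by
        rw [mgf_pi_sum_indicator_one hP, neg_neg]
    _ ≤ exp (s * ε) * exp (p * (exp (-s) - 1)) ^ Fintype.card ι := by
        gcongr
        linarith [add_one_le_exp (p * (exp (-s) - 1))]
    _ = exp (s * ε + μ * (exp (-s) - 1)) := by
        rw [← exp_nat_mul, ← exp_add, hμ]; ring_nf
    _ ≤ exp (-(μ - ε) ^ 2 / (2 * μ)) := exp_le_exp.2 (chernoff_lower_exponent_le hμ0 hεμ)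

theorem measureReal_pi_bernoulli_eq {ι : Type*} [Fintype ι] [DecidableEq ι] (p : ℝ≥0)
    (hp : p ≤ 1) {i : ι} {T : Finset ι} (hi : i ∉ T) :
    (Measure.pi fun _ : ι => (PMF.bernoulli p hp).toMeasure).real
      {v | v i = true ∧ ∀ j ∈ T, v j = false} = p * (1 - p) ^ #T := by
  have hset : {v : ι → Bool | v i = true ∧ ∀ j ∈ T, v j = false}
      = Set.univ.pi fun j => if j = i then {true} else if j ∈ T then {false} else Set.univ := by
    ext v
    simp only [Set.mem_ofPred_eq, Set.mem_univ_pi]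
    constructor
    · rintro ⟨hvi, hvT⟩ j
      split_ifs with hji hjT
      exacts [hji ▸ hvi, hvT j hjT, Set.mem_univ _]
    · intro hv
      refine ⟨by simpa using hv i, fun j hj => ?_⟩
      simpa [ne_of_mem_of_not_mem hj hi, hj] using hv j
  have hfactor : ∀ j, ((PMF.bernoulli p hp).toMeasure
      (if j = i then {true} else if j ∈ T then {false} else Set.univ)).toReal
      = if j = i then (p : ℝ) else if j ∈ T then 1 - p else 1 := by
    intro j
    split_ifs
    · simp [PMF.bernoulli_apply]
    · simp [PMF.bernoulli_apply, hp]
    · rw [measure_univ, ENNReal.toReal_one]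
  have hT : univ.erase i ∩ T = T :=
    inter_eq_right.2 fun j hj => mem_erase.2 ⟨ne_of_mem_of_not_mem hj hi, mem_univ j⟩
  rw [hset, measureReal_def, Measure.pi_pi, ENNReal.toReal_prod,
    prod_congr rfl fun j _ => hfactor j, ← mul_prod_erase univ _ (mem_univ i), if_pos rfl,
    prod_congr rfl fun j hj => if_neg (ne_of_mem_erase hj), prod_ite_mem, hT, prod_const]

theorem measure_biUnion_finset_le_card_mul {α ι : Type*} [MeasurableSpace α] (μ : Measure α)
    (s : Finset ι) (A : ι → Set α) {c : ℝ≥0∞} (h : ∀ i ∈ s, μ (A i) ≤ c) :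
    μ (⋃ i ∈ s, A i) ≤ #s * c :=
  (measure_biUnion_finset_le s A).trans ((sum_le_card_nsmul s _ c h).trans_eq (nsmul_eq_mul _ _))

instance isProbabilityMeasure_matrixBernoulliMeasure (B S : ℕ) (q : ℝ≥0∞) (h : q ≤ 1) :
    IsProbabilityMeasure (matrixBernoulliMeasure B S q h) := by
  unfold matrixBernoulliMeasure
  infer_instance

theorem matrixBernoulliMeasure_card_rows_lt_le (B S : ℕ) {q : ℝ} (hq0 : 0 ≤ q) (hq1 : q ≤ 1)
    {i : Fin S} {T : Finset (Fin S)} (hi : i ∉ T) {μ ε : ℝ} (hμ : μ = B * q * (1 - q) ^ #T)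
    (hμ0 : 0 < μ) (hεμ : ε ≤ μ) :
    matrixBernoulliMeasure B S (ENNReal.ofReal q) (ENNReal.ofReal_le_one.mpr hq1)
        {W | (#{r | W r i = true ∧ ∀ j ∈ T, W r j = false} : ℝ) < ε}
      ≤ ENNReal.ofReal (exp (-(μ - ε) ^ 2 / (2 * μ))) := by
  rw [← ofReal_measureReal (measure_ne_top _ _)]
  refine ENNReal.ofReal_le_ofReal (measureReal_pi_card_filter_lt_le
    (fun v : Fin S → Bool => v i = true ∧ ∀ j ∈ T, v j = false)
    (Set.toFinite _).measurableSet ?_ hμ0 hεμ)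
  have hp : (ENNReal.ofReal q).toNNReal ≤ 1 :=
    (ENNReal.toNNReal_mono ENNReal.one_ne_top (ENNReal.ofReal_le_one.2 hq1)).trans_eq
      ENNReal.toNNReal_one
  rw [measureReal_pi_bernoulli_eq _ hp hi, ENNReal.coe_toNNReal_eq_toReal,
    ENNReal.toReal_ofReal hq0, hμ, Fintype.card_fin]
  ring

theorem disjunctness_failure_union_bound_general (B S K : ℕ)
    (q : ℝ) (hq0 : 0 < q) (hq1 : q < 1)
    (μ₂ : ℝ) (hμ₂ : μ₂ = B * q * (1 - q) ^ (K - 1))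
    (ε : ℝ) (hε0 : 0 ≤ ε) (hεμ : ε < μ₂) :
    matrixBernoulliMeasure B S (ENNReal.ofReal q) (ENNReal.ofReal_le_one.mpr hq1.le)
        {W | ∃ i : Fin S, ∃ T : Finset (Fin S), i ∉ T ∧ T.card = K - 1 ∧
            ((Finset.univ.filter fun r : Fin B =>
              W r i = true ∧ ∀ j ∈ T, W r j = false).card : ℝ) < ε}
      ≤ (S : ENNReal) * ((S - 1).choose (K - 1) : ENNReal) *
          ENNReal.ofReal (Real.exp (-(μ₂ - ε) ^ 2 / (2 * μ₂))) := by
  calc _ ≤ matrixBernoulliMeasure B S (ENNReal.ofReal q) (ENNReal.ofReal_le_one.mpr hq1.le)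
        (⋃ i ∈ (univ : Finset (Fin S)), ⋃ T ∈ (univ.erase i).powersetCard (K - 1),
          {W | (#{r | W r i = true ∧ ∀ j ∈ T, W r j = false} : ℝ) < ε}) := by
        refine measure_mono fun W ⟨i, T, hi, hT, hW⟩ => ?_
        simp only [Set.mem_iUnion]
        exact ⟨i, mem_univ i, T, mem_powersetCard.2 ⟨subset_erase.2 ⟨subset_univ T, hi⟩, hT⟩, hW⟩
    _ ≤ #(univ : Finset (Fin S)) * ((S - 1).choose (K - 1) *
          ENNReal.ofReal (exp (-(μ₂ - ε) ^ 2 / (2 * μ₂)))) := by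
        refine measure_biUnion_finset_le_card_mul _ _ _ fun i _ => ?_
        have hcard : #((univ.erase i).powersetCard (K - 1)) = (S - 1).choose (K - 1) := by
          rw [card_powersetCard, card_erase_of_mem (mem_univ i), card_univ, Fintype.card_fin]
        refine hcard ▸ measure_biUnion_finset_le_card_mul _ _ _ fun T hT => ?_
        obtain ⟨hTi, hT⟩ := mem_powersetCard.1 hT
        exact matrixBernoulliMeasure_card_rows_lt_le B S hq0.le hq1.le
          (fun h => (mem_erase.1 (hTi h)).1 rfl) (by rw [hT, hμ₂]) (by linarith) hεμ.le
    _ = _ := by rw [card_univ, Fintype.card_fin, mul_assoc]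

/-- Union bound for the failure of `(K, ε)`-disjunctness under the i.i.d. Bernoulli(`q`)
measure on Boolean matrices `W : Fin B → Fin S → Bool` (`0 < q < 1`, `1 ≤ K ≤ S`). With
`μ₂ = B·q·(1−q)^{K−1}` and `0 ≤ ε < μ₂`, the probability that there exist a column `i` and
a set `T` of `K − 1` other columns such that fewer than `ε` rows `r` satisfy
`W r i = true` and `W r j = false` for all `j ∈ T` is at most
`S · C(S−1, K−1) · exp(−(μ₂ − ε)² / (2 μ₂))`. -/
theorem disjunctness_failure_union_bound (B S K : ℕ) (hK : 1 ≤ K) (hKS : K ≤ S)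
    (q : ℝ) (hq0 : 0 < q) (hq1 : q < 1)
    (μ₂ : ℝ) (hμ₂ : μ₂ = B * q * (1 - q) ^ (K - 1))
    (ε : ℝ) (hε0 : 0 ≤ ε) (hεμ : ε < μ₂) :
    matrixBernoulliMeasure B S (ENNReal.ofReal q) (ENNReal.ofReal_le_one.mpr hq1.le)
        {W | ∃ i : Fin S, ∃ T : Finset (Fin S), i ∉ T ∧ T.card = K - 1 ∧
            ((Finset.univ.filter fun r : Fin B =>
              W r i = true ∧ ∀ j ∈ T, W r j = false).card : ℝ) < ε}
      ≤ (S : ENNReal) * ((S - 1).choose (K - 1) : ENNReal) *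
          ENNReal.ofReal (Real.exp (-(μ₂ - ε) ^ 2 / (2 * μ₂))) :=
  disjunctness_failure_union_bound_general B S K q hq0 hq1 μ₂ hμ₂ ε hε0 hεμ
end

section
/- Let the column index set Fin S be partitioned into disjoint clusters V_1, …, V_L. For each l, let W^{(l)} be a Boolean matrix with rows Fin B_l and columns restricted to V_l that is (1, ε_l)-disjunct, and let T be a set of defective columns containing at most one element of each cluster (|T ∩ V_l| ≤ 1 for all l). Suppose for each l the noisy outcome vector g_l ∈ {0,1}^{B_l} satisfies: supp(g_l) ⊆ ⋃_{j ∈ T∩V_l} supp(W^{(l)}_{:,j}), and |supp(W^{(l)}_{:,j}) \ supp(g_l)| ≤ ε_l for every j ∈ T∩V_l. Then per-cluster distance decoding recovers all defective sensors: for every l, {i ∈ V_l : |supp(W^{(l)}_{:,i}) \ supp(g_l)| ≤ ε_l} = T ∩ V_l, and hence the union over l of the decoded sets equals T. -/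
/-- A Boolean matrix `W` (with columns restricted to the cluster `V`) is `(K, ε)`-disjunct
on `V` if for every column `i ∈ V` and every set `T ⊆ V` with `|T| ≤ K`,
`|supp(W_{:,i}) \ ⋃_{j ∈ T, j ≠ i} supp(W_{:,j})| > ε`. -/
def DisjunctOn {R I : Type*} [Fintype R] [DecidableEq R] [DecidableEq I]
    (W : R → I → Bool) (V : Finset I) (K : ℕ) (ε : ℝ) : Prop :=
  ∀ i ∈ V, ∀ T ⊆ V, T.card ≤ K →
    ε < ((supp W i \ (T.erase i).biUnion fun j => supp W j).card : ℝ)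

/-- Per-cluster distance decoding. Let the columns `Fin S` be partitioned into disjoint
clusters `V l` (pairwise disjoint with union everything). For each `l`, let `W l` be a
Boolean matrix with rows `Fin (B l)` that is `(1, ε l)`-disjunct on `V l`, and let `T` be a
set of defective columns with at most one element per cluster. If each noisy outcome vector
`g l` satisfies `supp (g l) ⊆ ⋃_{j ∈ T ∩ V l} supp((W l)_{:,j})` and
`|supp((W l)_{:,j}) \ supp (g l)| ≤ ε l` for every `j ∈ T ∩ V l`, then for every `l` the
per-cluster distance decoder recovers `T ∩ V l`, and the union of the decoded sets is `T`. -/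
theorem cluster_distance_decoding {S L : ℕ} (B : Fin L → ℕ)
    (V : Fin L → Finset (Fin S))
    (hdisjoint : ∀ l l', l ≠ l' → Disjoint (V l) (V l'))
    (hcover : Finset.univ.biUnion V = Finset.univ)
    (W : ∀ l, Fin (B l) → Fin S → Bool) (ε : Fin L → ℝ)
    (hW : ∀ l, DisjunctOn (W l) (V l) 1 (ε l))
    (T : Finset (Fin S)) (hT : ∀ l, (T ∩ V l).card ≤ 1)
    (g : ∀ l, Fin (B l) → Bool)
    (hg_sub : ∀ l, suppv (g l) ⊆ (T ∩ V l).biUnion fun j => supp (W l) j)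
    (hg_err : ∀ l, ∀ j ∈ T ∩ V l, ((supp (W l) j \ suppv (g l)).card : ℝ) ≤ ε l) :
    (∀ l, ((V l).filter fun i => ((supp (W l) i \ suppv (g l)).card : ℝ) ≤ ε l) = T ∩ V l) ∧
    (Finset.univ.biUnion fun l =>
        (V l).filter fun i => ((supp (W l) i \ suppv (g l)).card : ℝ) ≤ ε l) = T := by
  have hmain : ∀ l, ((V l).filter fun i =>
      ((supp (W l) i \ suppv (g l)).card : ℝ) ≤ ε l) = T ∩ V l := by
    intro l
    apply Finset.ext
    intro i
    simp only [Finset.mem_filter, Finset.mem_inter]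
    constructor
    · rintro ⟨hiV, hle⟩
      refine ⟨?_, hiV⟩
      by_contra hiT
      have hiTV : i ∉ T ∩ V l := fun h => hiT (Finset.mem_inter.1 h).1
      have hd := hW l i hiV (T ∩ V l) Finset.inter_subset_right (hT l)
      rw [Finset.erase_eq_of_notMem hiTV] at hd
      have hsub : supp (W l) i \ (T ∩ V l).biUnion (fun j => supp (W l) j)
          ⊆ supp (W l) i \ suppv (g l) :=
        Finset.sdiff_subset_sdiff (le_refl _) (hg_sub l)
      have := Finset.card_le_card hsub
      have : ((supp (W l) i \ (T ∩ V l).biUnion fun j => supp (W l) j).card : ℝ)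
          ≤ ((supp (W l) i \ suppv (g l)).card : ℝ) := by exact_mod_cast this
      linarith
    · rintro ⟨hiT, hiV⟩
      exact ⟨hiV, hg_err l i (Finset.mem_inter.2 ⟨hiT, hiV⟩)⟩
  refine ⟨hmain, ?_⟩
  have : (Finset.univ.biUnion fun l =>
      (V l).filter fun i => ((supp (W l) i \ suppv (g l)).card : ℝ) ≤ ε l)
      = Finset.univ.biUnion fun l => T ∩ V l := by
    apply Finset.biUnion_congr rfl
    intro l _; exact hmain l
  rw [this]
  apply Finset.ext
  intro i
  simp only [Finset.mem_biUnion, Finset.mem_inter, Finset.mem_univ, true_and]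
  constructor
  · rintro ⟨l, hiT, _⟩; exact hiT
  · intro hiT
    have : i ∈ Finset.univ.biUnion V := by rw [hcover]; exact Finset.mem_univ i
    obtain ⟨l, _, hl⟩ := Finset.mem_biUnion.1 this
    exact ⟨l, hiT, hl⟩
end

section
/- For every real α with 0 ≤ α ≤ 1/8 and every natural number K ≥ 1, one has 3^{−α} ≤ (1 − α/K)^K ≤ 2^{−α}. -/
/-!
With `x = α / K`, both bounds are `K`-th powers of bounds on `1 - x`, since `b ^ (-α) = (b ^ (-x)) ^ K`.
The upper bound is `(1 - α / K) ^ K ≤ exp (-α) ≤ 2 ^ (-α)`, as `2 < e`. For the lower bound,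
`t ↦ 3 ^ (-t) + t` is convex, equals `1` at `t = 0` and is at most `1` at `t = 1/8` (this is
`(8/7) ^ 8 ≤ 3`), so it is at most `1` on `[0, 1/8]`, i.e. `3 ^ (-x) ≤ 1 - x` there.
-/

open Real

lemma rpow_neg_le_one_sub_of_mem_Icc {b c x : ℝ} (hb : 0 < b) (hc : b ^ (-c) ≤ 1 - c)
    (hx : x ∈ Set.Icc 0 c) : b ^ (-x) ≤ 1 - x := by
  have hfun : (fun t : ℝ => b⁻¹ ^ t) + id = fun t => b ^ (-t) + t := by
    ext t
    simp [inv_rpow hb.le, rpow_neg hb.le]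
  have hconv : ConvexOn ℝ Set.univ (fun t : ℝ => b ^ (-t) + t) :=
    hfun ▸ (convexOn_rpow_left (inv_pos.2 hb)).add (convexOn_id convex_univ)
  have hseg : x ∈ segment ℝ 0 c := by rwa [segment_eq_Icc (hx.1.trans hx.2)]
  have := hconv.le_on_segment (Set.mem_univ 0) (Set.mem_univ c) hseg
  simp only [neg_zero, rpow_zero, add_zero, max_eq_left (by linarith : b ^ (-c) + c ≤ 1)] at this
  linarith

lemma three_rpow_neg_one_eighth_le : (3 : ℝ) ^ (-(1 / 8 : ℝ)) ≤ 1 - 1 / 8 := by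
  rw [show -(1 / 8 : ℝ) = (-8)⁻¹ by norm_num,
    rpow_inv_le_iff_of_neg (by norm_num) (by norm_num) (by norm_num),
    show (-8 : ℝ) = ((-8 : ℤ) : ℝ) by norm_num, rpow_intCast]
  norm_num

/-- For every real `α` with `0 ≤ α ≤ 1/8` and every natural `K ≥ 1`,
`3^{−α} ≤ (1 − α/K)^K ≤ 2^{−α}` (real powers for `2` and `3`). -/
theorem pow_one_sub_div_bounds (α : ℝ) (hα0 : 0 ≤ α) (hα : α ≤ 1 / 8)
    (K : ℕ) (hK : 1 ≤ K) :
    (3 : ℝ) ^ (-α) ≤ (1 - α / K) ^ K ∧ (1 - α / K) ^ K ≤ (2 : ℝ) ^ (-α) := by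
  have hK1 : (1 : ℝ) ≤ K := by exact_mod_cast hK
  constructor
  · have hx : α / K ∈ Set.Icc 0 (1 / 8) :=
      ⟨by positivity, (div_le_self hα0 hK1).trans hα⟩
    calc (3 : ℝ) ^ (-α) = ((3 : ℝ) ^ (-(α / K))) ^ K := by
          rw [← rpow_mul_natCast (by norm_num), neg_mul, div_mul_cancel₀ α (by positivity)]
      _ ≤ (1 - α / K) ^ K := by
          gcongr
          exact rpow_neg_le_one_sub_of_mem_Icc (by norm_num) three_rpow_neg_one_eighth_le hx
  · calc (1 - α / K) ^ K ≤ exp (-α) := one_sub_div_pow_le_exp_neg (by linarith)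
      _ = exp 1 ^ (-α) := (exp_one_rpow _).symm
      _ ≤ (2 : ℝ) ^ (-α) := rpow_le_rpow_of_nonpos two_pos exp_one_gt_two.le (neg_nonpos.2 hα0)
end
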